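/- Let (A; {E_i}; A*; {E*_i}) be a Leonard system on V. For 0 ≤ i ≤ d, the subspace τ_i(A)E*_0V equals (E*_0V + ⋯ + E*_iV) ∩ (E_iV + ⋯ + E_dV), where τ_i(λ) = (λ-θ_0)⋯(λ-θ_{i-1}). In particular this intersection is one-dimensional. -/

import Mathlib

open Polynomial

/-- The primitive idempotent `E_i = ∏_{j ≠ i} (A - θ_j I)/(θ_i - θ_j)` of a
multiplicity-free operator `A` with eigenvalues `θ_0, …, θ_d`. -/
noncomputable def primIdem {K : Type} [Field K] {V : Type} [AddCommGroup V] [Module K V]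
    {d : ℕ} (A : Module.End K V) (θ : Fin (d+1) → K) (i : Fin (d+1)) : Module.End K V :=
  Polynomial.aeval A (∏ j ∈ Finset.univ.erase i, ((θ i - θ j)⁻¹ • (X - C (θ j))))

/-- The polynomial `τ_i(λ) = (λ-θ_0)(λ-θ_1)⋯(λ-θ_{i-1})`. -/
noncomputable def tauP {K : Type} [Field K] (d : ℕ) (θ : Fin (d+1) → K) (i : ℕ) :
    Polynomial K :=
  ∏ k ∈ Finset.univ.filter (fun k : Fin (d+1) => (k : ℕ) < i), (X - C (θ k))

/-- The polynomial `η_i(λ) = (λ-θ_d)(λ-θ_{d-1})⋯(λ-θ_{d-i+1})`. -/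
noncomputable def etaP {K : Type} [Field K] (d : ℕ) (θ : Fin (d+1) → K) (i : ℕ) :
    Polynomial K :=
  ∏ k ∈ Finset.univ.filter (fun k : Fin (d+1) => d - i < (k : ℕ)), (X - C (θ k))

/-- A Leonard system on a `(d+1)`-dimensional vector space `V` over a field `K`. -/
structure LeonardSystem (K V : Type) [Field K] [AddCommGroup V] [Module K V] (d : ℕ) where
  A : Module.End K V
  As : Module.End K V
  θ : Fin (d+1) → K
  θs : Fin (d+1) → K
  hfin : FiniteDimensional K V
  hdim : Module.finrank K V = d + 1
  θ_inj : Function.Injective θ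
  θs_inj : Function.Injective θs
  hEig : ∀ i, Module.End.HasEigenvalue A (θ i)
  hEigs : ∀ i, Module.End.HasEigenvalue As (θs i)
  hFar : ∀ i j : Fin (d+1), ((i:ℕ) + 1 < j ∨ (j:ℕ) + 1 < i) →
    primIdem A θ i * As * primIdem A θ j = 0
  hNear : ∀ i j : Fin (d+1), ((i:ℕ) + 1 = j ∨ (j:ℕ) + 1 = i) →
    primIdem A θ i * As * primIdem A θ j ≠ 0
  hFars : ∀ i j : Fin (d+1), ((i:ℕ) + 1 < j ∨ (j:ℕ) + 1 < i) →
    primIdem As θs i * A * primIdem As θs j = 0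
  hNears : ∀ i j : Fin (d+1), ((i:ℕ) + 1 = j ∨ (j:ℕ) + 1 = i) →
    primIdem As θs i * A * primIdem As θs j ≠ 0

namespace LeonardSystem

variable {K : Type} [Field K] {V : Type} [AddCommGroup V] [Module K V] {d : ℕ}
  (L : LeonardSystem K V d)

/-- `E_i`, the `i`-th primitive idempotent of `A`. -/
noncomputable def E (i : Fin (d+1)) : Module.End K V := primIdem L.A L.θ i

/-- `E*_i`, the `i`-th primitive idempotent of `A*`. -/
noncomputable def Es (i : Fin (d+1)) : Module.End K V := primIdem L.As L.θs i

/-- `τ_i(A)`. -/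
noncomputable def tau (i : ℕ) : Module.End K V := Polynomial.aeval L.A (tauP d L.θ i)

/-- `η_i(A)`. -/
noncomputable def eta (i : ℕ) : Module.End K V := Polynomial.aeval L.A (etaP d L.θ i)

/-- The first split sequence `φ_i = (θ*_0-θ*_i) tr(τ_i(A)E*_0)/tr(τ_{i-1}(A)E*_0)`,
meaningful for `1 ≤ i ≤ d`. -/
noncomputable def φ (i : ℕ) : K :=
  if h : i < d + 1 then
    (L.θs 0 - L.θs ⟨i, h⟩) * (LinearMap.trace K V (L.tau i * L.Es 0))
      / (LinearMap.trace K V (L.tau (i-1) * L.Es 0))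
  else 0

/-- The second split sequence `ϕ_i = (θ*_0-θ*_i) tr(η_i(A)E*_0)/tr(η_{i-1}(A)E*_0)`,
meaningful for `1 ≤ i ≤ d`. -/
noncomputable def ϕ (i : ℕ) : K :=
  if h : i < d + 1 then
    (L.θs 0 - L.θs ⟨i, h⟩) * (LinearMap.trace K V (L.eta i * L.Es 0))
      / (LinearMap.trace K V (L.eta (i-1) * L.Es 0))
  else 0

/-- The switching element `S = ∑_r (ϕ_d⋯ϕ_{d-r+1})/(φ_1⋯φ_r) E_r`. -/
noncomputable def S : Module.End K V :=
  ∑ r : Fin (d+1),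
    ((∏ k ∈ Finset.Icc (d - (r:ℕ) + 1) d, L.ϕ k) / (∏ k ∈ Finset.Icc 1 (r:ℕ), L.φ k)) • L.E r

/-- The dual switching element `S* = ∑_r (ϕ_1⋯ϕ_r)/(φ_1⋯φ_r) E*_r`. -/
noncomputable def Ss : Module.End K V :=
  ∑ r : Fin (d+1),
    ((∏ k ∈ Finset.Icc 1 (r:ℕ), L.ϕ k) / (∏ k ∈ Finset.Icc 1 (r:ℕ), L.φ k)) • L.Es r

end LeonardSystem

/-!
Take eigenbases `b` of `A` and `b*` of `A*` and put `w_m = τ_m(A) b*_0`. Since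
`E_k τ_m(A) = τ_m(θ_k) E_k`, `w_m` lies in `E_mV + ⋯ + E_dV`. In the basis `b*` the matrix of `A`
is irreducible tridiagonal, so each step `w_{m+1} = (A - θ_m) w_m` adds exactly one new
`b*`-coordinate: `w_m` lies in `E*_0V + ⋯ + E*_mV` with a nonzero `E*_m`-component. Hence the
`w_m` form a basis, so the two sums in the statement span `V`; as their dimensions are `i + 1` and
`d + 1 - i`, their intersection is a line, and it contains `w_i`.
-/

open Module

section MultiplicityFree

variable {K V : Type} [Field K] [AddCommGroup V] [Module K V] {d : ℕ}
  {A : End K V} {θ : Fin (d+1) → K}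

theorem primIdem_eq_aeval_lagrangeBasis (i : Fin (d+1)) :
    primIdem A θ i = aeval A (Lagrange.basis Finset.univ θ i) := by
  unfold primIdem Lagrange.basis
  congr 1
  refine Finset.prod_congr rfl fun j _ => ?_
  rw [Lagrange.basisDivisor, smul_eq_C_mul]

theorem primIdem_apply_of_hasEigenvector (hθ : Function.Injective θ) {i j : Fin (d+1)} {u : V}
    (hu : A.HasEigenvector (θ j) u) : primIdem A θ i u = if i = j then u else 0 := by
  rw [primIdem_eq_aeval_lagrangeBasis, End.aeval_apply_of_hasEigenvector hu]
  split_ifs with hij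
  · rw [hij, Lagrange.eval_basis_self hθ.injOn (Finset.mem_univ j), one_smul]
  · rw [Lagrange.eval_basis_of_ne hij (Finset.mem_univ j), zero_smul]

theorem exists_basis_hasEigenvector [FiniteDimensional K V] (hdim : finrank K V = d + 1)
    (hθ : Function.Injective θ) (hEig : ∀ i, A.HasEigenvalue (θ i)) :
    ∃ b : Basis (Fin (d+1)) K V, ∀ i, A.HasEigenvector (θ i) (b i) := by
  choose u hu using fun i => (hEig i).exists_hasEigenvector
  refine ⟨basisOfLinearIndependentOfCardEqFinrank (A.eigenvectors_linearIndependent' θ hθ u hu)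
    (by rw [hdim, Fintype.card_fin]), fun i => ?_⟩
  rw [coe_basisOfLinearIndependentOfCardEqFinrank]
  exact hu i

variable (b : Basis (Fin (d+1)) K V) (hb : ∀ i, A.HasEigenvector (θ i) (b i))
include hb

theorem Module.Basis.repr_aeval_apply (p : K[X]) (x : V) (i : Fin (d+1)) :
    b.repr (aeval A p x) i = p.eval (θ i) * b.repr x i := by
  have : (b.coord i).comp (aeval A p) = p.eval (θ i) • b.coord i := b.ext fun j => by
    obtain rfl | h := eq_or_ne j i <;> simp [End.aeval_apply_of_hasEigenvector (hb _), *]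
  exact LinearMap.congr_fun this x

theorem primIdem_apply_eq_repr_smul (hθ : Function.Injective θ) (i : Fin (d+1)) (x : V) :
    primIdem A θ i x = b.repr x i • b i := by
  have : primIdem A θ i = (b.coord i).smulRight (b i) := b.ext fun j => by
    rw [primIdem_apply_of_hasEigenvector hθ (hb j), LinearMap.smulRight_apply, b.coord_apply,
      b.repr_self, Finsupp.single_apply]
    split_ifs <;> simp_all
  rw [this, LinearMap.smulRight_apply, b.coord_apply]

variable (hθ : Function.Injective θ)
include hθ

theorem range_primIdem (i : Fin (d+1)) : LinearMap.range (primIdem A θ i) = K ∙ b i := by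
  ext x
  simp only [LinearMap.mem_range, Submodule.mem_span_singleton,
    primIdem_apply_eq_repr_smul b hb hθ]
  exact ⟨fun ⟨y, hy⟩ => ⟨_, hy⟩, fun ⟨c, hc⟩ => ⟨x, by simp [← hc]⟩⟩

theorem sum_range_primIdem (s : Finset (Fin (d+1))) :
    ∑ j ∈ s, LinearMap.range (primIdem A θ j) = Submodule.span K (b '' s) := by
  classical
  induction s using Finset.induction with
  | empty => simp
  | insert j s hj ih =>
    rw [Finset.sum_insert hj, ih, range_primIdem b hb hθ, Finset.coe_insert, Set.image_insert_eq,
      Submodule.span_insert, Submodule.add_eq_sup]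

theorem primIdem_mul_mul_primIdem_eq_zero_iff (C : End K V) (i j : Fin (d+1)) :
    primIdem A θ i * C * primIdem A θ j = 0 ↔ LinearMap.toMatrix b b C i j = 0 := by
  have key : ∀ x, (primIdem A θ i * C * primIdem A θ j) x =
      (b.repr x j * LinearMap.toMatrix b b C i j) • b i := fun x => by
    simp [primIdem_apply_eq_repr_smul b hb hθ, LinearMap.toMatrix_apply, smul_smul]
  constructor
  · intro h
    simpa [b.ne_zero i] using (key (b j)).symm.trans (LinearMap.congr_fun h (b j))
  · intro h
    ext x
    simp [key, h]

end MultiplicityFree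

theorem Module.Basis.finrank_span_image {K V ι : Type} [Field K] [AddCommGroup V] [Module K V]
    (b : Basis ι K V) (s : Finset ι) : finrank K (Submodule.span K (b '' s)) = s.card := by
  rw [Set.image_eq_range]
  exact (finrank_span_eq_card (b.linearIndependent.comp _ Subtype.val_injective)).trans (by simp)

theorem Module.Basis.span_eq_top_of_repr_triangular {K V ι : Type} [Field K] [AddCommGroup V]
    [Module K V] [Fintype ι] [DecidableEq ι] [LinearOrder ι] (b : Basis ι K V) (w : ι → V)
    (hlow : ∀ i j, i < j → b.repr (w i) j = 0) (hdiag : ∀ i, b.repr (w i) i ≠ 0) :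
    Submodule.span K (Set.range w) = ⊤ := by
  refine (b.is_basis_iff_det.mpr ?_).2
  rw [b.det_apply, Matrix.det_of_isUpperTriangular fun j i hij => by
    rw [b.toMatrix_apply, hlow i j hij]]
  exact (Finset.prod_ne_zero_iff.mpr fun i _ => hdiag i).isUnit

theorem Submodule.span_singleton_eq_inf_of_sup_eq_top {K V : Type} [Field K] [AddCommGroup V]
    [Module K V] [FiniteDimensional K V] {S₁ S₂ : Submodule K V} {w : V} (hw : w ≠ 0)
    (hw₁ : w ∈ S₁) (hw₂ : w ∈ S₂) (hsup : S₁ ⊔ S₂ = ⊤)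
    (hrank : finrank K S₁ + finrank K S₂ = finrank K V + 1) :
    (K ∙ w) = S₁ ⊓ S₂ ∧ finrank K ↥(S₁ ⊓ S₂) = 1 := by
  have hinf : finrank K ↥(S₁ ⊓ S₂) = 1 := by
    have := Submodule.finrank_sup_add_finrank_inf_eq S₁ S₂
    rw [hsup, finrank_top] at this
    omega
  refine ⟨Submodule.eq_of_le_of_finrank_le ?_ (by rw [hinf, finrank_span_singleton hw]), hinf⟩
  exact (Submodule.span_singleton_le_iff_mem _ _).mpr ⟨hw₁, hw₂⟩

section Hessenberg

variable {K V : Type} [Field K] [AddCommGroup V] [Module K V] {d : ℕ}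
  (b : Basis (Fin (d+1)) K V) (C : End K V)
  (hfar : ∀ i j : Fin (d+1), (j:ℕ) + 1 < i → LinearMap.toMatrix b b C i j = 0)

omit hfar in
theorem repr_apply_eq_sum_toMatrix_mul (x : V) (k : Fin (d+1)) :
    b.repr (C x) k = ∑ j, LinearMap.toMatrix b b C k j * b.repr x j :=
  (congrFun (LinearMap.toMatrix_mulVec_repr b b C x) k).symm

include hfar

theorem repr_apply_eq_zero_of_hessenberg {x : V} {n : ℕ}
    (hx : ∀ k : Fin (d+1), n < k → b.repr x k = 0) (k : Fin (d+1)) (hk : n + 1 < k) :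
    b.repr (C x) k = 0 := by
  rw [repr_apply_eq_sum_toMatrix_mul]
  refine Finset.sum_eq_zero fun j _ => ?_
  rcases le_or_gt (j:ℕ) n with hj | hj
  · rw [hfar k j (by omega), zero_mul]
  · rw [hx j hj, mul_zero]

theorem repr_apply_succ_of_hessenberg {x : V} {n : ℕ}
    (hx : ∀ k : Fin (d+1), n < k → b.repr x k = 0) (hn : n + 1 < d + 1) :
    b.repr (C x) ⟨n+1, hn⟩ =
      LinearMap.toMatrix b b C ⟨n+1, hn⟩ ⟨n, by omega⟩ * b.repr x ⟨n, by omega⟩ := by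
  rw [repr_apply_eq_sum_toMatrix_mul]
  refine Finset.sum_eq_single _ (fun j _ hj => ?_) (by simp)
  rcases lt_or_gt_of_ne (Fin.val_ne_of_ne hj) with hj | hj
  · rw [hfar _ j (by simp; omega), zero_mul]
  · rw [hx j hj, mul_zero]

theorem repr_eq_zero_and_ne_zero_of_hessenberg
    (hnear : ∀ i j : Fin (d+1), (j:ℕ) + 1 = i → LinearMap.toMatrix b b C i j ≠ 0)
    (x : ℕ → V) (hx0 : x 0 = b 0) (hx : ∀ n < d, ∃ c : K, x (n+1) = C (x n) - c • x n) :
    ∀ n (hn : n < d + 1),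
      (∀ k : Fin (d+1), n < k → b.repr (x n) k = 0) ∧ b.repr (x n) ⟨n, hn⟩ ≠ 0
  | 0, _ => by
    rw [hx0, b.repr_self]
    exact ⟨fun k hk => Finsupp.single_eq_of_ne (by rintro rfl; simp at hk), by simp⟩
  | n + 1, hn => by
    obtain ⟨hsupp, hlead⟩ := repr_eq_zero_and_ne_zero_of_hessenberg hnear x hx0 hx n (by omega)
    obtain ⟨c, hc⟩ := hx n (by omega)
    refine ⟨fun k hk => ?_, ?_⟩
    · rw [hc, map_sub, map_smul, Finsupp.sub_apply, Finsupp.smul_apply,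
        repr_apply_eq_zero_of_hessenberg b C hfar hsupp k hk, hsupp k (by omega)]
      simp
    · rw [hc, map_sub, map_smul, Finsupp.sub_apply, Finsupp.smul_apply,
        repr_apply_succ_of_hessenberg b C hfar hsupp hn, hsupp ⟨n+1, hn⟩ n.lt_succ_self]
      simpa using mul_ne_zero (hnear ⟨n+1, hn⟩ ⟨n, by omega⟩ rfl) hlead

end Hessenberg

section Tau

variable {K : Type} [Field K] {d : ℕ} (θ : Fin (d+1) → K)

theorem tauP_zero : tauP d θ 0 = 1 := by
  simp [tauP]

theorem tauP_succ {n : ℕ} (hn : n < d + 1) :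
    tauP d θ (n+1) = (X - C (θ ⟨n, hn⟩)) * tauP d θ n := by
  have : Finset.univ.filter (fun k : Fin (d+1) => (k:ℕ) < n + 1) =
      insert ⟨n, hn⟩ (Finset.univ.filter fun k : Fin (d+1) => (k:ℕ) < n) := by
    ext k
    simp only [Finset.mem_insert, Finset.mem_filter, Finset.mem_univ, true_and, Fin.ext_iff]
    omega
  rw [tauP, this, Finset.prod_insert (by simp)]
  rfl

theorem eval_tauP_of_lt {n : ℕ} {k : Fin (d+1)} (hk : (k:ℕ) < n) :
    (tauP d θ n).eval (θ k) = 0 := by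
  rw [tauP, eval_prod]
  exact Finset.prod_eq_zero (Finset.mem_filter.mpr ⟨Finset.mem_univ k, hk⟩) (by simp)

end Tau

namespace LeonardSystem

variable {K V : Type} [Field K] [AddCommGroup V] [Module K V] {d : ℕ} (L : LeonardSystem K V d)

theorem tau_succ_apply {n : ℕ} (hn : n < d + 1) (x : V) :
    L.tau (n+1) x = L.A (L.tau n x) - L.θ ⟨n, hn⟩ • L.tau n x := by
  simp [tau, tauP_succ _ hn]

theorem repr_tau_apply_eq_zero_of_lt (b : Basis (Fin (d+1)) K V)
    (hb : ∀ i, L.A.HasEigenvector (L.θ i) (b i)) {n : ℕ} (x : V) {k : Fin (d+1)}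
    (hk : (k:ℕ) < n) :
    b.repr (L.tau n x) k = 0 := by
  rw [tau, b.repr_aeval_apply hb, eval_tauP_of_lt _ hk, zero_mul]

theorem tau_apply_mem_span_basis_Ici (b : Basis (Fin (d+1)) K V)
    (hb : ∀ i, L.A.HasEigenvector (L.θ i) (b i)) {i m : Fin (d+1)} (hm : i ≤ m) (x : V) :
    L.tau m x ∈ Submodule.span K (b '' ↑(Finset.Ici i)) := by
  refine b.mem_span_image.mpr fun k hk => ?_
  by_contra hki
  rw [Finset.coe_Ici, Set.mem_Ici, not_le] at hki
  exact Finsupp.mem_support_iff.mp hk (L.repr_tau_apply_eq_zero_of_lt b hb x (by omega))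

variable (bs : Basis (Fin (d+1)) K V) (hbs : ∀ i, L.As.HasEigenvector (L.θs i) (bs i))
include hbs

theorem repr_tau_apply_basis_zero (n : ℕ) (hn : n < d + 1) :
    (∀ k : Fin (d+1), n < k → bs.repr (L.tau n (bs 0)) k = 0) ∧
      bs.repr (L.tau n (bs 0)) ⟨n, hn⟩ ≠ 0 := by
  have hmatrix := primIdem_mul_mul_primIdem_eq_zero_iff bs hbs L.θs_inj L.A
  refine repr_eq_zero_and_ne_zero_of_hessenberg bs L.A
    (fun i j h => (hmatrix i j).mp (L.hFars i j (Or.inr h)))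
    (fun i j h => (hmatrix i j).not.mp (L.hNears i j (Or.inr h)))
    (fun n => L.tau n (bs 0)) (by simp [tau, tauP_zero])
    (fun n hn => ⟨_, L.tau_succ_apply (by omega) _⟩) n hn

theorem span_range_tau_apply_basis_zero :
    Submodule.span K (Set.range fun m : Fin (d+1) => L.tau m (bs 0)) = ⊤ :=
  bs.span_eq_top_of_repr_triangular _
    (fun m k hmk => (L.repr_tau_apply_basis_zero bs hbs m m.2).1 k hmk)
    (fun m => (L.repr_tau_apply_basis_zero bs hbs m m.2).2)

theorem tau_apply_basis_zero_mem_span_basis_Iic {i m : Fin (d+1)} (hm : m ≤ i) :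
    L.tau m (bs 0) ∈ Submodule.span K (bs '' ↑(Finset.Iic i)) := by
  refine bs.mem_span_image.mpr fun k hk => ?_
  by_contra hki
  rw [Finset.coe_Iic, Set.mem_Iic, not_le] at hki
  exact Finsupp.mem_support_iff.mp hk ((L.repr_tau_apply_basis_zero bs hbs m m.2).1 k (by omega))

end LeonardSystem

/-- `τ_i(A) E*_0 V = (E*_0V+⋯+E*_iV) ∩ (E_iV+⋯+E_dV)`, a one-dimensional
subspace. -/
theorem LeonardSystem.tau_Es0_eq_inf {K : Type} [Field K] {V : Type}
    [AddCommGroup V] [Module K V] {d : ℕ} (L : LeonardSystem K V d) (i : Fin (d+1)) :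
    Submodule.map (L.tau (i:ℕ)) (LinearMap.range (L.Es 0)) =
      (∑ j ∈ Finset.univ.filter (fun j : Fin (d+1) => j ≤ i), LinearMap.range (L.Es j)) ⊓
      (∑ j ∈ Finset.univ.filter (fun j : Fin (d+1) => i ≤ j), LinearMap.range (L.E j)) ∧
    Module.finrank K
      ((∑ j ∈ Finset.univ.filter (fun j : Fin (d+1) => j ≤ i), LinearMap.range (L.Es j)) ⊓
       (∑ j ∈ Finset.univ.filter (fun j : Fin (d+1) => i ≤ j), LinearMap.range (L.E j)) :
        Submodule K V) = 1 := by
  have := L.hfin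
  obtain ⟨b, hb⟩ := exists_basis_hasEigenvector L.hdim L.θ_inj L.hEig
  obtain ⟨bs, hbs⟩ := exists_basis_hasEigenvector L.hdim L.θs_inj L.hEigs
  have hmap : Submodule.map (L.tau i) (LinearMap.range (L.Es 0)) = K ∙ L.tau i (bs 0) := by
    rw [Es, range_primIdem bs hbs L.θs_inj, Submodule.map_span, Set.image_singleton]
  have hsum : ∀ s, ∑ j ∈ s, LinearMap.range (L.Es j) = Submodule.span K (bs '' s) :=
    sum_range_primIdem bs hbs L.θs_inj
  have hsum' : ∀ s, ∑ j ∈ s, LinearMap.range (L.E j) = Submodule.span K (b '' s) :=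
    sum_range_primIdem b hb L.θ_inj
  rw [hmap, hsum, hsum', Finset.filter_ge_eq_Iic, Finset.filter_le_eq_Ici]
  refine Submodule.span_singleton_eq_inf_of_sup_eq_top
    (fun h => (L.repr_tau_apply_basis_zero bs hbs i i.2).2 (by simp [h]))
    (L.tau_apply_basis_zero_mem_span_basis_Iic bs hbs le_rfl)
    (L.tau_apply_mem_span_basis_Ici b hb le_rfl _) ?_ ?_
  · rw [eq_top_iff, ← L.span_range_tau_apply_basis_zero bs hbs, Submodule.span_le]
    rintro _ ⟨m, rfl⟩
    rcases le_total m i with hm | hm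
    · exact Submodule.mem_sup_left (L.tau_apply_basis_zero_mem_span_basis_Iic bs hbs hm)
    · exact Submodule.mem_sup_right (L.tau_apply_mem_span_basis_Ici b hb hm _)
  · rw [L.hdim, bs.finrank_span_image, b.finrank_span_image, Fin.card_Iic, Fin.card_Ici]
    omega
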